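/- Let S₁, S₂, T₁, T₂ be Banach spaces with S₁ ⊕ T₁ isomorphic to S₂ ⊕ T₂, and suppose T₁ and T₂ are essentially incomparable. Then there exists a closed subspace of T₁ of finite codimension that is isomorphic to a complemented subspace of S₂. -/

import Mathlib

open Module

/-- A bounded operator between (semi)normed spaces is *Fredholm of index `k`* if it has closed
range, finite-dimensional kernel and finite-dimensional cokernel, with
`dim ker - dim coker = k`. -/
def IsFredholmOfIndex {V W : Type*} [SeminormedAddCommGroup V] [NormedSpace ℂ V]
    [SeminormedAddCommGroup W] [NormedSpace ℂ W] (T : V →L[ℂ] W) (k : ℤ) : Prop :=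
  IsClosed (LinearMap.range (T : V →ₗ[ℂ] W) : Set W) ∧ FiniteDimensional ℂ (LinearMap.ker (T : V →ₗ[ℂ] W)) ∧
    FiniteDimensional ℂ (W ⧸ LinearMap.range (T : V →ₗ[ℂ] W)) ∧
    (finrank ℂ (LinearMap.ker (T : V →ₗ[ℂ] W)) : ℤ) - finrank ℂ (W ⧸ LinearMap.range (T : V →ₗ[ℂ] W)) = k

/-- A bounded operator between (semi)normed spaces is *Fredholm* if it has closed range and
finite-dimensional kernel and cokernel. -/
def IsFredholm {V W : Type*} [SeminormedAddCommGroup V] [NormedSpace ℂ V]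
    [SeminormedAddCommGroup W] [NormedSpace ℂ W] (T : V →L[ℂ] W) : Prop :=
  IsClosed (LinearMap.range (T : V →ₗ[ℂ] W) : Set W) ∧ FiniteDimensional ℂ (LinearMap.ker (T : V →ₗ[ℂ] W)) ∧
    FiniteDimensional ℂ (W ⧸ LinearMap.range (T : V →ₗ[ℂ] W))

/-- `T ∈ B(G,H)` is *inessential* if `I_G - S T` is Fredholm for every `S ∈ B(H,G)`. -/
def Inessential {G H : Type*} [SeminormedAddCommGroup G] [NormedSpace ℂ G]
    [SeminormedAddCommGroup H] [NormedSpace ℂ H] (T : G →L[ℂ] H) : Prop :=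
  ∀ S : H →L[ℂ] G, IsFredholm (ContinuousLinearMap.id ℂ G - S.comp T)

/-!
Write `Φ : S₁ × T₁ ≃L S₂ × T₂` and `Φ⁻¹` as block matrices. The lower-right entry of `Φ⁻¹ Φ = 1`
reads `G B + H D = 1` with `B : T₁ → S₂`, `G : S₂ → T₁`, `D : T₁ → T₂`, `H : T₂ → T₁`. As `D` is
inessential, `G B = 1 - H D` is Fredholm, so it has a continuous left inverse on a closed complement
`M` of its finite-dimensional kernel. Then so has `B` on `M`, which makes `B` an isomorphism of `M`
onto a complemented subspace of `S₂`.
-/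

theorem LinearMap.range_comp_subtype_of_isCompl_ker {R M M₂ : Type*} [Ring R] [AddCommGroup M]
    [AddCommGroup M₂] [Module R M] [Module R M₂] (f : M →ₗ[R] M₂) {C : Submodule R M}
    (h : IsCompl C (LinearMap.ker f)) : LinearMap.range (f ∘ₗ C.subtype) = LinearMap.range f := by
  have hfactor : f ∘ₗ C.subtype =
      (LinearMap.range f).subtype ∘ₗ (f.kerComplementEquivRange h).toLinearMap := by
    ext; simp
  rw [hfactor, LinearMap.range_comp_of_range_eq_top _ (LinearEquiv.range _),
    Submodule.range_subtype]

theorem ContinuousLinearEquiv.lowerRight_symm_comp_self {R S₁ T₁ S₂ T₂ : Type*} [Semiring R]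
    [TopologicalSpace S₁] [AddCommMonoid S₁] [Module R S₁]
    [TopologicalSpace T₁] [AddCommMonoid T₁] [Module R T₁] [ContinuousAdd T₁]
    [TopologicalSpace S₂] [AddCommMonoid S₂] [Module R S₂]
    [TopologicalSpace T₂] [AddCommMonoid T₂] [Module R T₂]
    (Φ : (S₁ × T₁) ≃L[R] (S₂ × T₂)) :
    (.snd R S₁ T₁ ∘L (Φ.symm : S₂ × T₂ →L[R] S₁ × T₁) ∘L .inl R S₂ T₂) ∘L
        (.fst R S₂ T₂ ∘L (Φ : S₁ × T₁ →L[R] S₂ × T₂) ∘L .inr R S₁ T₁) +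
      (.snd R S₁ T₁ ∘L (Φ.symm : S₂ × T₂ →L[R] S₁ × T₁) ∘L .inr R S₂ T₂) ∘L
        (.snd R S₂ T₂ ∘L (Φ : S₁ × T₁ →L[R] S₂ × T₂) ∘L .inr R S₁ T₁) = .id R T₁ := by
  ext t
  have hsplit : Φ (0, t) = ((Φ (0, t)).1, 0) + (0, (Φ (0, t)).2) := by simp
  simp [← Prod.snd_add, ← map_add, ← hsplit]

theorem IsFredholm.exists_finiteCodim_hasLeftInverse_comp_subtypeL {E F : Type*}
    [NormedAddCommGroup E] [NormedSpace ℂ E] [CompleteSpace E]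
    [NormedAddCommGroup F] [NormedSpace ℂ F] [CompleteSpace F] {K : E →L[ℂ] F} (hK : IsFredholm K) :
    ∃ M : Submodule ℂ E, IsClosed (M : Set E) ∧ FiniteDimensional ℂ (E ⧸ M) ∧
      (K ∘L M.subtypeL).HasLeftInverse := by
  obtain ⟨hrange, hker, hcoker⟩ := hK
  obtain ⟨M, hM, hKM⟩ :=
    (Submodule.ClosedComplemented.of_finiteDimensional K.ker).exists_isClosed_isCompl
  have : CompleteSpace M := hM.completeSpace_coe
  have hrange_eq : (K ∘L M.subtypeL).range = K.range :=
    LinearMap.range_comp_subtype_of_isCompl_ker _ hKM.symm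
  refine ⟨M, hM, (Submodule.quotientEquivOfIsCompl M _ hKM.symm).symm.finiteDimensional,
    .of_injective_of_isClosed_range_of_closedComplement_range ?_ ?_ ?_⟩
  · rw [injective_iff_map_eq_zero]
    exact fun x hx ↦ Subtype.ext (Submodule.disjoint_def.mp hKM.disjoint x hx x.2)
  · rwa [← ContinuousLinearMap.coe_coe, ← LinearMap.coe_range, hrange_eq]
  · rw [hrange_eq]
    exact .of_finiteDimensional_quotient hrange

theorem finite_codim_subspace_iso_complemented_general (S₁ : Type u) [NormedAddCommGroup S₁]
    [NormedSpace ℂ S₁]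
    (S₂ : Type u) [NormedAddCommGroup S₂] [NormedSpace ℂ S₂] [CompleteSpace S₂]
    (T₁ : Type u) [NormedAddCommGroup T₁] [NormedSpace ℂ T₁] [CompleteSpace T₁]
    (T₂ : Type u) [NormedAddCommGroup T₂] [NormedSpace ℂ T₂]
    (hiso : Nonempty ((S₁ × T₁) ≃L[ℂ] (S₂ × T₂)))
    (hinc : ∀ T : T₁ →L[ℂ] T₂, Inessential T) :
    ∃ M : Submodule ℂ T₁, IsClosed (M : Set T₁) ∧ FiniteDimensional ℂ (T₁ ⧸ M) ∧
      ∃ N : Submodule ℂ S₂, N.ClosedComplemented ∧ Nonempty (M ≃L[ℂ] N) := by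
  obtain ⟨Φ⟩ := hiso
  have hblocks := Φ.lowerRight_symm_comp_self
  set B := ContinuousLinearMap.fst ℂ S₂ T₂ ∘L (Φ : S₁ × T₁ →L[ℂ] S₂ × T₂) ∘L
    ContinuousLinearMap.inr ℂ S₁ T₁
  set G := ContinuousLinearMap.snd ℂ S₁ T₁ ∘L (Φ.symm : S₂ × T₂ →L[ℂ] S₁ × T₁) ∘L
    ContinuousLinearMap.inl ℂ S₂ T₂
  have hGB : IsFredholm (G ∘L B) := by
    rw [eq_sub_of_add_eq hblocks]
    exact hinc _ _
  obtain ⟨M, hM, hMcodim, hGBM⟩ := hGB.exists_finiteCodim_hasLeftInverse_comp_subtypeL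
  have hBM : (B ∘L M.subtypeL).HasLeftInverse := .of_comp (g := G) hGBM
  have : CompleteSpace M := hM.completeSpace_coe
  exact ⟨M, hM, hMcodim, _, hBM.closedComplemented_range,
    ⟨ContinuousLinearMap.equivRange hBM.injective hBM.isClosed_range⟩⟩

/-- If `S₁ ⊕ T₁ ≅ S₂ ⊕ T₂` and `T₁, T₂` are essentially incomparable, then some
closed finite-codimensional subspace of `T₁` is isomorphic to a complemented subspace
of `S₂`. -/
theorem finite_codim_subspace_iso_complemented (S₁ : Type u) [NormedAddCommGroup S₁]
    [NormedSpace ℂ S₁] [CompleteSpace S₁]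
    (S₂ : Type u) [NormedAddCommGroup S₂] [NormedSpace ℂ S₂] [CompleteSpace S₂]
    (T₁ : Type u) [NormedAddCommGroup T₁] [NormedSpace ℂ T₁] [CompleteSpace T₁]
    (T₂ : Type u) [NormedAddCommGroup T₂] [NormedSpace ℂ T₂] [CompleteSpace T₂]
    (hiso : Nonempty ((S₁ × T₁) ≃L[ℂ] (S₂ × T₂)))
    (hinc : ∀ T : T₁ →L[ℂ] T₂, Inessential T) :
    ∃ M : Submodule ℂ T₁, IsClosed (M : Set T₁) ∧ FiniteDimensional ℂ (T₁ ⧸ M) ∧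
      ∃ N : Submodule ℂ S₂, N.ClosedComplemented ∧ Nonempty (M ≃L[ℂ] N) :=
  finite_codim_subspace_iso_complemented_general S₁ S₂ T₁ T₂ hiso hinc
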